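/- arXiv:2510.12708 — 3 statements merged into one kernel-verified Lean document; each statement's English description precedes it below -/
import Mathlib

section
/- Let d ≥ 1 be an integer and let A ⊆ R be the d-th Veronese subalgebra of R, namely the k-subalgebra spanned by all monomials whose weighted degree is divisible by d. Then the elements x_0^d, …, x_{n−1}^d, y^d form a regular sequence on A; that is, A/(x_0^d, …, x_{n−1}^d, y^d)A ≠ 0 and the image of each element in the sequence is a nonzerodivisor on the quotient of A by the ideal generated by the preceding elements. -/
/-!
Since the Veronese subalgebra `A` is spanned by the monomials it contains, and dividing such a
monomial by some `x_v ^ d` leaves a monomial of `A` (the weighted degree of `x_v ^ d` is a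
multiple of `d`), the ideal of `A` generated by some of the `x_v ^ d` is the contraction of the
monomial ideal they generate in `R`. Regularity therefore reduces to the polynomial ring, where
`x_v ^ d` is a nonzerodivisor modulo the monomial ideal generated by the `x_w ^ d` with `w ≠ v`,
and `1` lies in none of these ideals.
-/

open MvPolynomial

/-- The weighted degree of an exponent vector on the variables of
`R = k[x_0, …, x_{n-1}, y]`, where each `x_j` has degree 1 and `y` has degree 2. -/
def degw (n : ℕ) (σ : (Fin n ⊕ Unit) →₀ ℕ) : ℕ :=
  (∑ j : Fin n, σ (Sum.inl j)) + 2 * σ (Sum.inr ())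

/-- The `d`-th Veronese subalgebra of `R = k[x_0, …, x_{n-1}, y]`: the `k`-subalgebra
generated (equivalently, spanned) by all monomials whose weighted degree is divisible
by `d`. -/
noncomputable def veronese (k : Type*) [Field k] (n d : ℕ) : Subalgebra k (MvPolynomial (Fin n ⊕ Unit) k) :=
  Algebra.adjoin k
    {p | ∃ σ : (Fin n ⊕ Unit) →₀ ℕ, p = monomial σ (1 : k) ∧ d ∣ degw n σ}

namespace RingTheory.Sequence

variable {A : Type*} [CommRing A]

theorem isWeaklyRegular_self_iff (rs : List A) :
    IsWeaklyRegular A rs ↔ ∀ i (h : i < rs.length) (x : A),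
      rs[i] * x ∈ Ideal.ofList (rs.take i) → x ∈ Ideal.ofList (rs.take i) := by
  simp only [isWeaklyRegular_iff, Ideal.mul_top,
    isSMulRegular_quotient_iff_mem_of_smul_mem, smul_eq_mul]

theorem isRegular_self_iff (rs : List A) :
    IsRegular A rs ↔ IsWeaklyRegular A rs ∧ Ideal.ofList rs ≠ ⊤ := by
  rw [isRegular_iff, Ideal.smul_eq_mul, Ideal.mul_top, ne_comm]

end RingTheory.Sequence

theorem List.Nodup.getElem_notMem_take {α : Type*} {l : List α} (hl : l.Nodup) {i : ℕ}
    (hi : i < l.length) : l[i] ∉ l.take i := by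
  intro h
  refine List.disjoint_take_drop hl le_rfl h ?_
  rw [List.drop_eq_getElem_cons hi]
  exact List.mem_cons_self

namespace MvPolynomial

variable {σ R : Type*} [CommSemiring R] {d : ℕ}

theorem mem_span_X_pow_image_iff {T : Set σ} {p : MvPolynomial σ R} :
    p ∈ Ideal.span ((fun v => (X v : MvPolynomial σ R) ^ d) '' T) ↔
      ∀ μ ∈ p.support, ∃ v ∈ T, Finsupp.single v d ≤ μ := by
  have : (fun v => (X v : MvPolynomial σ R) ^ d) = (monomial · 1) ∘ (Finsupp.single · d) :=
    by ext1 v; exact X_pow_eq_monomial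
  simp [this, Set.image_comp, mem_ideal_span_monomial_image]

theorem mem_of_X_pow_mul_mem_span_X_pow_image {T : Set σ} {v : σ} (hv : v ∉ T) (e : ℕ)
    {q : MvPolynomial σ R}
    (h : X v ^ e * q ∈ Ideal.span ((fun w => (X w : MvPolynomial σ R) ^ d) '' T)) :
    q ∈ Ideal.span ((fun w => (X w : MvPolynomial σ R) ^ d) '' T) := by
  rw [mem_span_X_pow_image_iff] at h ⊢
  intro μ hμ
  obtain ⟨w, hw, hle⟩ := h (Finsupp.single v e + μ) <| by
    rwa [mem_support_iff, X_pow_eq_monomial, coeff_monomial_mul, one_mul, ← mem_support_iff]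
  have hwv : v ≠ w := fun h => hv (h ▸ hw)
  refine ⟨w, hw, ?_⟩
  rw [Finsupp.single_le_iff] at hle ⊢
  simpa [Finsupp.single_apply, hwv] using hle

theorem one_notMem_span_X_pow_image [Nontrivial R] (hd : d ≠ 0) (T : Set σ) :
    (1 : MvPolynomial σ R) ∉ Ideal.span ((fun w => (X w : MvPolynomial σ R) ^ d) '' T) := by
  rw [mem_span_X_pow_image_iff]
  intro h
  obtain ⟨w, -, hle⟩ := h 0 (by simp)
  exact hd (by simpa using hle)

end MvPolynomial

section Veronese

variable {k : Type*} [Field k] {n d : ℕ}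

theorem degw_add (μ ν : (Fin n ⊕ Unit) →₀ ℕ) :
    degw n (μ + ν) = degw n μ + degw n ν := by
  simp only [degw, Finsupp.add_apply, Finset.sum_add_distrib]
  ring

theorem dvd_degw_single (v : Fin n ⊕ Unit) : d ∣ degw n (Finsupp.single v d) := by
  cases v with
  | inl j => simp [degw, Finsupp.single_apply]
  | inr _ => simp [degw]

variable (k n d) in
noncomputable def veroneseSpan : Subalgebra k (MvPolynomial (Fin n ⊕ Unit) k) where
  carrier := {p | ∀ μ ∈ p.support, d ∣ degw n μ}
  mul_mem' {p q} hp hq μ hμ := by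
    classical
    obtain ⟨ν, hν, ρ, hρ, rfl⟩ := Finset.mem_add.mp (support_mul p q hμ)
    rw [degw_add]
    exact dvd_add (hp ν hν) (hq ρ hρ)
  add_mem' hp hq μ hμ := (Finset.mem_union.mp (Finsupp.support_add hμ)).elim (hp μ) (hq μ)
  algebraMap_mem' c μ hμ := by
    rw [algebraMap_eq, C_apply] at hμ
    rw [Finset.mem_singleton.mp (support_monomial_subset hμ)]
    simp [degw]

theorem mem_veronese_iff {p : MvPolynomial (Fin n ⊕ Unit) k} :
    p ∈ veronese k n d ↔ ∀ μ ∈ p.support, d ∣ degw n μ := by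
  refine ⟨fun hp => ?_, fun h => ?_⟩
  · refine (Algebra.adjoin_le ?_ : veronese k n d ≤ veroneseSpan k n d) hp
    rintro _ ⟨μ, rfl, hμ⟩ ν hν
    rwa [Finset.mem_singleton.mp (support_monomial_subset hν)]
  · rw [p.as_sum]
    refine Subalgebra.sum_mem _ fun μ hμ => ?_
    rw [← mul_one (coeff μ p), ← C_mul_monomial]
    exact Subalgebra.mul_mem _ (Subalgebra.algebraMap_mem _ _)
      (Algebra.subset_adjoin ⟨μ, rfl, h μ hμ⟩)

theorem monomial_mem_veronese {μ : (Fin n ⊕ Unit) →₀ ℕ} (hμ : d ∣ degw n μ) (c : k) :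
    monomial μ c ∈ veronese k n d :=
  mem_veronese_iff.mpr fun ν hν => by rwa [Finset.mem_singleton.mp (support_monomial_subset hν)]

variable (k d) in
noncomputable def veroneseXPow (v : Fin n ⊕ Unit) : veronese k n d :=
  ⟨X v ^ d, X_pow_eq_monomial (R := k) ▸ monomial_mem_veronese (dvd_degw_single v) 1⟩

@[simp]
theorem coe_veroneseXPow (v : Fin n ⊕ Unit) :
    (veroneseXPow k d v : MvPolynomial (Fin n ⊕ Unit) k) = X v ^ d :=
  rfl

theorem mem_span_veroneseXPow_image_iff {T : Set (Fin n ⊕ Unit)} {p : veronese k n d} :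
    p ∈ Ideal.span (veroneseXPow k d '' T) ↔
      (p : MvPolynomial (Fin n ⊕ Unit) k) ∈ Ideal.span ((fun v => X v ^ d) '' T) := by
  refine ⟨fun hp => ?_, fun hp => ?_⟩
  · refine Ideal.mem_comap.mp
      ((Ideal.span_le.mpr ?_ : _ ≤ Ideal.comap (veronese k n d).val _) hp)
    rintro _ ⟨v, hv, rfl⟩
    exact Ideal.subset_span ⟨v, hv, rfl⟩
  suffices (p : MvPolynomial (Fin n ⊕ Unit) k) ∈
      Submodule.span (veronese k n d) ((fun v => X v ^ d) '' T) by
    have himage : (fun v => (X v : MvPolynomial (Fin n ⊕ Unit) k) ^ d) '' T =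
        Algebra.linearMap (veronese k n d) _ '' (veroneseXPow k d '' T) := by
      rw [Set.image_image]
      rfl
    rw [himage, ← Submodule.map_span] at this
    obtain ⟨q, hq, hqp⟩ := this
    rwa [← Subtype.val_injective hqp]
  rw [(p : MvPolynomial (Fin n ⊕ Unit) k).as_sum]
  refine Submodule.sum_mem _ fun μ hμ => ?_
  obtain ⟨v, hv, hle⟩ := mem_span_X_pow_image_iff.mp hp μ hμ
  have hdeg : d ∣ degw n (μ - Finsupp.single v d) := by
    have h := degw_add (μ - Finsupp.single v d) (Finsupp.single v d)
    rw [tsub_add_cancel_of_le hle] at h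
    exact (Nat.dvd_add_left (dvd_degw_single v)).mp (h ▸ mem_veronese_iff.mp p.2 μ hμ)
  have : monomial μ (coeff μ (p : MvPolynomial (Fin n ⊕ Unit) k)) =
      (⟨_, monomial_mem_veronese hdeg (coeff μ p.1)⟩ : veronese k n d) • X v ^ d := by
    change _ = monomial _ _ * _
    rw [X_pow_eq_monomial, monomial_mul, tsub_add_cancel_of_le hle, mul_one]
  rw [this]
  exact Submodule.smul_mem _ _ (Submodule.subset_span ⟨v, hv, rfl⟩)

open RingTheory.Sequence in
theorem isRegular_map_veroneseXPow (hd : d ≠ 0)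
    {vs : List (Fin n ⊕ Unit)} (hvs : vs.Nodup) :
    IsRegular (veronese k n d) (vs.map (veroneseXPow k d)) := by
  have ofList_map (l : List (Fin n ⊕ Unit)) :
      Ideal.ofList (l.map (veroneseXPow k d)) = Ideal.span (veroneseXPow k d '' {v | v ∈ l}) := by
    simp only [Ideal.ofList, List.mem_map]
    rfl
  rw [isRegular_self_iff, isWeaklyRegular_self_iff]
  refine ⟨fun i hi p hp => ?_, fun htop => ?_⟩
  · rw [List.length_map] at hi
    rw [← List.map_take, ofList_map, mem_span_veroneseXPow_image_iff] at hp ⊢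
    rw [List.getElem_map, Subalgebra.coe_mul, coe_veroneseXPow] at hp
    exact mem_of_X_pow_mul_mem_span_X_pow_image (T := {v | v ∈ vs.take i})
      (hvs.getElem_notMem_take hi) d hp
  · rw [ofList_map, Ideal.eq_top_iff_one, mem_span_veroneseXPow_image_iff] at htop
    exact one_notMem_span_X_pow_image hd _ htop

end Veronese

theorem stmt_4_general (k : Type*) [Field k] (n : ℕ) (d : ℕ) (hd : 1 ≤ d)
    (a : Fin n → veronese k n d) (b : veronese k n d)
    (ha : ∀ j : Fin n, (a j : MvPolynomial (Fin n ⊕ Unit) k) = X (Sum.inl j) ^ d)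
    (hb : (b : MvPolynomial (Fin n ⊕ Unit) k) = X (Sum.inr ()) ^ d) :
    RingTheory.Sequence.IsRegular (veronese k n d) (List.ofFn a ++ [b]) := by
  obtain rfl : a = fun j => veroneseXPow k d (Sum.inl j) := funext fun j => Subtype.ext (ha j)
  obtain rfl : b = veroneseXPow k d (Sum.inr ()) := Subtype.ext hb
  have hvs : (List.ofFn Sum.inl ++ [Sum.inr ()] : List (Fin n ⊕ Unit)).Nodup := by
    simp [List.nodup_append, List.nodup_ofFn, Sum.inl_injective]
  simpa [List.map_ofFn, Function.comp_def] using
    isRegular_map_veroneseXPow (k := k) (Nat.one_le_iff_ne_zero.mp hd) hvs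

/-- Let `d ≥ 1` and let `A` be the `d`-th Veronese subalgebra of
`R = k[x_0, …, x_{n-1}, y]` (with `deg x_j = 1`, `deg y = 2`). Then the elements
`x_0^d, …, x_{n-1}^d, y^d` of `A` form a regular sequence on `A`. -/
theorem stmt_4 (k : Type*) [Field k] (n : ℕ) (hn : 1 ≤ n) (d : ℕ) (hd : 1 ≤ d)
    (a : Fin n → veronese k n d) (b : veronese k n d)
    (ha : ∀ j : Fin n, (a j : MvPolynomial (Fin n ⊕ Unit) k) = X (Sum.inl j) ^ d)
    (hb : (b : MvPolynomial (Fin n ⊕ Unit) k) = X (Sum.inr ()) ^ d) :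
    RingTheory.Sequence.IsRegular (veronese k n d) (List.ofFn a ++ [b]) :=
  stmt_4_general k n d hd a b ha hb
end

section
/- Let n ≥ 2 and 1 ≤ q ≤ n − 1 be integers, and let d be an even integer with d ≥ q + 1. Then the number of pairs (a, b), where a : Fin (n−q) → ℕ and b ∈ ℕ satisfy a_0 + ⋯ + a_{n−q−1} + 2b = d, a_0 ≤ d − q − 1, a_j ≤ d − 1 for all 1 ≤ j ≤ n − q − 1, and b ≤ d/2 − 1, equals ∑_{c=0}^{d/2} C(d − 2c + n − q − 1, n − q − 1) − ∑_{c=0}^{⌊q/2⌋} C(n − 2c − 1, n − q − 1) − (n − q). -/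
/-!
The pairs `(a, b)` with `∑ a + 2b = d` are the exponents of the monomials of weighted degree `d`
in `k[x_q, …, x_{n-1}, y]`, `deg y = 2`; sorting them by `b` counts them as the first sum of
binomials. A pair violates one of the bounds exactly when `a₀ ≥ d - q`, or it is a pure power
`x_j ^ d` with `j ≥ 1`, or it is `y ^ (d / 2)`. Subtracting `d - q` from `a₀` matches the first
family with all pairs of degree `q` (the second sum), and since `d - q ≥ 1` the three families
are disjoint.
-/

open Finset

lemma card_piAntidiag_univ {ι : Type*} [Fintype ι] [DecidableEq ι] (N : ℕ) :
    #(piAntidiag (univ : Finset ι) N) = (Fintype.card ι + N - 1).choose N := by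
  rw [← map_sym_eq_piAntidiag, card_map, sym_univ, card_univ, Sym.card_sym_eq_choose]

lemma single_le_of_le_apply {ι M : Type*} [DecidableEq ι] [AddMonoid M] [PartialOrder M]
    [CanonicallyOrderedAdd M] {f : ι → M} {i : ι} {s : M} (h : s ≤ f i) :
    Pi.single i s ≤ f := by
  intro j
  rcases eq_or_ne j i with rfl | hji
  · simpa using h
  · simp [Pi.single_eq_of_ne hji]

/-- Exponents `(a, b)` of the monomials `x ^ a * y ^ b` of weighted degree `N` in
`k[x_0, …, x_{m-1}, y]`, `deg y = 2`; its cardinality is the Hilbert function in degree `N`. -/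
def weightedExponents (m N : ℕ) : Finset ((Fin m → ℕ) × ℕ) :=
  (range (N / 2 + 1)).biUnion fun c => piAntidiag univ (N - 2 * c) ×ˢ {c}

namespace weightedExponents

variable {m N : ℕ} {p : (Fin m → ℕ) × ℕ}

lemma mem_iff : p ∈ weightedExponents m N ↔ ∑ j, p.1 j + 2 * p.2 = N := by
  simp only [weightedExponents, mem_biUnion, mem_range, mem_product, mem_piAntidiag,
    mem_singleton, mem_univ, implies_true, and_true]
  constructor
  · rintro ⟨c, hc, hsum, rfl⟩
    rw [hsum]
    omega
  · intro h
    exact ⟨p.2, by omega, eq_tsub_of_add_eq h, rfl⟩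

lemma card_eq (hm : m ≠ 0) :
    #(weightedExponents m N) = ∑ c ∈ range (N / 2 + 1), (N - 2 * c + m - 1).choose (m - 1) := by
  rw [weightedExponents, card_biUnion]
  · refine sum_congr rfl fun c _ => ?_
    obtain ⟨k, rfl⟩ := Nat.exists_eq_succ_of_ne_zero hm
    rw [card_product, card_singleton, mul_one, card_piAntidiag_univ, Fintype.card_fin,
      Nat.succ_add_sub_one, Nat.add_succ_sub_one, Nat.succ_sub_one, add_comm k, Nat.choose_symm_add]
  · intro c _ c' _ hcc
    exact disjoint_product.2 (Or.inr (disjoint_singleton.2 hcc))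

lemma eq_single_of_le_apply (hp : p ∈ weightedExponents m N) {j : Fin m} (hj : N ≤ p.1 j) :
    p = (Pi.single j N, 0) := by
  rw [mem_iff, ← add_sum_erase _ _ (mem_univ j)] at hp
  have hrest : ∑ i ∈ univ.erase j, p.1 i = 0 := by omega
  refine Prod.ext (funext fun i => ?_) (by simp only; omega)
  rcases eq_or_ne i j with rfl | hij
  · simp only [Pi.single_eq_same]
    omega
  · simp only [Pi.single_eq_of_ne hij]
    exact sum_eq_zero_iff.1 hrest i (mem_erase.2 ⟨hij, mem_univ i⟩)

lemma card_filter_exists_le_apply (hN : N ≠ 0) (J : Finset (Fin m)) :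
    #{p ∈ weightedExponents m N | ∃ j ∈ J, N ≤ p.1 j} = #J := by
  have hspikes : {p ∈ weightedExponents m N | ∃ j ∈ J, N ≤ p.1 j} =
      J.image fun j => (Pi.single j N, 0) := by
    ext p
    simp only [mem_filter, mem_image]
    constructor
    · rintro ⟨hp, j, hj, hNj⟩
      exact ⟨j, hj, (eq_single_of_le_apply hp hNj).symm⟩
    · rintro ⟨j, hj, rfl⟩
      refine ⟨mem_iff.2 ?_, j, hj, by simp⟩
      simp [sum_pi_single']
  rw [hspikes, card_image_of_injective]
  intro i j hij
  simpa [Pi.single_apply, hN] using congr_fun (congr_arg Prod.fst hij) i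

lemma filter_le_two_mul_snd (hN : Even N) :
    {p ∈ weightedExponents m N | N ≤ 2 * p.2} = {(0, N / 2)} := by
  ext p
  simp only [mem_filter, mem_singleton, mem_iff]
  constructor
  · rintro ⟨hsum, hb⟩
    have hzero : ∑ j, p.1 j = 0 := by omega
    refine Prod.ext (funext fun j => sum_eq_zero_iff.1 hzero j (mem_univ j)) ?_
    simp only
    omega
  · rintro rfl
    simp only [Pi.zero_apply, sum_const_zero, zero_add]
    exact ⟨Nat.two_mul_div_two_of_even hN, (Nat.two_mul_div_two_of_even hN).ge⟩

lemma card_filter_le_apply (i : Fin m) {s : ℕ} (hs : s ≤ N) :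
    #{p ∈ weightedExponents m N | s ≤ p.1 i} = #(weightedExponents m (N - s)) := by
  symm
  refine card_nbij' (fun p => (p.1 + Pi.single i s, p.2)) (fun p => (p.1 - Pi.single i s, p.2))
    ?_ ?_ ?_ ?_
  · intro p hp
    simp only [mem_coe, mem_filter, mem_iff] at hp ⊢
    simp only [Pi.add_apply, sum_add_distrib, sum_pi_single', mem_univ, if_true,
      Pi.single_eq_same, le_add_iff_nonneg_left, zero_le, and_true]
    omega
  · intro p hp
    simp only [mem_coe, mem_filter, mem_iff] at hp ⊢
    have := congr_arg (∑ j, · j) (tsub_add_cancel_of_le (single_le_of_le_apply hp.2))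
    simp only [Pi.add_apply, sum_add_distrib, sum_pi_single', mem_univ, if_true] at this
    omega
  · intro p _
    simp
  · intro p hp
    simp only [mem_coe, mem_filter] at hp
    simp [tsub_add_cancel_of_le (single_le_of_le_apply hp.2)]

theorem card_filter_lt_add [NeZero m] {s : ℕ} (hs : 0 < s) (hsN : s ≤ N) (hN : Even N) :
    #{p ∈ weightedExponents m N | p.1 0 < s ∧ (∀ j ≠ 0, p.1 j < N) ∧ 2 * p.2 < N}
      + (#(weightedExponents m (N - s)) + m) = #(weightedExponents m N) := by
  set W := weightedExponents m N
  have hA : #{p ∈ W | s ≤ p.1 0} = #(weightedExponents m (N - s)) :=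
    card_filter_le_apply 0 hsN
  have hB : #{p ∈ W | ∃ j ∈ univ.erase 0, N ≤ p.1 j} = m - 1 := by
    rw [card_filter_exists_le_apply (by omega), card_erase_of_mem (mem_univ _), card_fin]
  have hC : #{p ∈ W | N ≤ 2 * p.2} = 1 := by
    rw [filter_le_two_mul_snd hN, card_singleton]
  have hAB : Disjoint {p ∈ W | s ≤ p.1 0} {p ∈ W | ∃ j ∈ univ.erase 0, N ≤ p.1 j} := by
    refine disjoint_filter.2 fun p hp hsp ⟨j, hj, hNj⟩ => ?_
    have hp0 : p.1 0 = 0 := by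
      rw [eq_single_of_le_apply hp hNj]
      exact Pi.single_eq_of_ne (ne_of_mem_erase hj).symm _
    omega
  have hABC : Disjoint {p ∈ W | s ≤ p.1 0 ∨ ∃ j ∈ univ.erase 0, N ≤ p.1 j}
      {p ∈ W | N ≤ 2 * p.2} := by
    refine disjoint_filter.2 fun p hp hAB hNp => ?_
    have hp0 : p ∈ {p ∈ W | N ≤ 2 * p.2} := mem_filter.2 ⟨hp, hNp⟩
    rw [filter_le_two_mul_snd hN, mem_singleton] at hp0
    subst hp0
    rcases hAB with h | ⟨j, -, h⟩ <;> simp only [Pi.zero_apply] at h <;> omega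
  have hbad : {p ∈ W | ¬(p.1 0 < s ∧ (∀ j ≠ 0, p.1 j < N) ∧ 2 * p.2 < N)} =
      {p ∈ W | s ≤ p.1 0 ∨ ∃ j ∈ univ.erase 0, N ≤ p.1 j} ∪
        {p ∈ W | N ≤ 2 * p.2} := by
    rw [← filter_or]
    refine filter_congr fun p _ => ?_
    simp only [mem_erase, mem_univ, and_true, not_and_or, not_lt, not_forall, exists_prop,
      or_assoc]
  have := card_filter_add_card_filter_not (s := W)
    (p := fun p => p.1 0 < s ∧ (∀ j ≠ 0, p.1 j < N) ∧ 2 * p.2 < N)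
  rw [hbad, card_union_of_disjoint hABC, filter_or, card_union_of_disjoint hAB, hA, hB, hC]
    at this
  have : 1 ≤ m := Nat.one_le_iff_ne_zero.2 (NeZero.ne m)
  omega

end weightedExponents

open weightedExponents

lemma exponent_bounds_iff {m : ℕ} [NeZero m] {a : Fin m → ℕ} {b q d : ℕ} (hqd : q < d)
    (hd : Even d) :
    ((∀ j : Fin m, ((j : ℕ) = 0 → a j ≤ d - q - 1) ∧ (1 ≤ (j : ℕ) → a j ≤ d - 1)) ∧
      b ≤ d / 2 - 1) ↔ a 0 < d - q ∧ (∀ j ≠ 0, a j < d) ∧ 2 * b < d := by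
  obtain ⟨e, rfl⟩ := hd
  constructor
  · rintro ⟨h, hb⟩
    have h0 := (h 0).1 rfl
    refine ⟨by omega, fun j hj => ?_, by omega⟩
    have := (h j).2 (Nat.one_le_iff_ne_zero.2 (Fin.val_ne_zero_iff.2 hj))
    omega
  · rintro ⟨h0, h, hb⟩
    refine ⟨fun j => ⟨fun hj => ?_, fun hj => ?_⟩, by omega⟩
    · rw [Fin.val_eq_zero_iff.1 hj]
      omega
    · have := h j (Fin.val_ne_zero_iff.1 (by omega))
      omega

theorem stmt_8_general (n q d : ℕ) (hn : 2 ≤ n) (hq2 : q ≤ n - 1)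
    (hd : Even d) (hdq : q + 1 ≤ d) :
    (Set.ncard {p : (Fin (n - q) → ℕ) × ℕ |
        (∑ j, p.1 j) + 2 * p.2 = d ∧
        (∀ j : Fin (n - q), ((j : ℕ) = 0 → p.1 j ≤ d - q - 1) ∧ (1 ≤ (j : ℕ) → p.1 j ≤ d - 1)) ∧
        p.2 ≤ d / 2 - 1} : ℤ) =
      (∑ c ∈ Finset.range (d / 2 + 1), ((d - 2 * c + n - q - 1).choose (n - q - 1) : ℤ))
        - (∑ c ∈ Finset.range (q / 2 + 1), ((n - 2 * c - 1).choose (n - q - 1) : ℤ))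
        - ((n : ℤ) - q) := by
  have hm : n - q ≠ 0 := by omega
  have : NeZero (n - q) := ⟨hm⟩
  have hcount := card_filter_lt_add (m := n - q) (s := d - q) (by omega) (Nat.sub_le d q) hd
  rw [Nat.sub_sub_self (by omega), card_eq hm, card_eq hm] at hcount
  have hsum_d : ∑ c ∈ range (d / 2 + 1), (d - 2 * c + (n - q) - 1).choose (n - q - 1) =
      ∑ c ∈ range (d / 2 + 1), (d - 2 * c + n - q - 1).choose (n - q - 1) :=
    sum_congr rfl fun c _ => by
      rw [show d - 2 * c + (n - q) - 1 = d - 2 * c + n - q - 1 by omega]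
  have hsum_q : ∑ c ∈ range (q / 2 + 1), (q - 2 * c + (n - q) - 1).choose (n - q - 1) =
      ∑ c ∈ range (q / 2 + 1), (n - 2 * c - 1).choose (n - q - 1) :=
    sum_congr rfl fun c hc => by
      rw [show q - 2 * c + (n - q) - 1 = n - 2 * c - 1 by rw [mem_range] at hc; omega]
  rw [hsum_d, hsum_q] at hcount
  calc (Set.ncard _ : ℤ)
      = #{p ∈ weightedExponents (n - q) d |
          p.1 0 < d - q ∧ (∀ j ≠ 0, p.1 j < d) ∧ 2 * p.2 < d} := by
        rw [← Set.ncard_coe_finset]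
        congr 2
        ext p
        simp only [Set.mem_ofPred_eq, mem_coe, mem_filter, mem_iff,
          exponent_bounds_iff (q := q) (by omega) hd]
    _ = _ := by
        rw [← Nat.cast_sum, ← Nat.cast_sum]
        omega

/-- For `n ≥ 2`, `1 ≤ q ≤ n - 1`, and even `d ≥ q + 1`, the number of pairs
`(a, b)` with `a : Fin (n-q) → ℕ`, `b : ℕ`, `a 0 + ⋯ + a (n-q-1) + 2b = d`, `a 0 ≤ d - q - 1`,
`a j ≤ d - 1` for `1 ≤ j ≤ n - q - 1`, and `b ≤ d/2 - 1`, equals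
`∑_{c=0}^{d/2} C(d - 2c + n - q - 1, n - q - 1) - ∑_{c=0}^{⌊q/2⌋} C(n - 2c - 1, n - q - 1) - (n - q)`. -/
theorem stmt_8 (n q d : ℕ) (hn : 2 ≤ n) (hq1 : 1 ≤ q) (hq2 : q ≤ n - 1)
    (hd : Even d) (hdq : q + 1 ≤ d) :
    (Set.ncard {p : (Fin (n - q) → ℕ) × ℕ |
        (∑ j, p.1 j) + 2 * p.2 = d ∧
        (∀ j : Fin (n - q), ((j : ℕ) = 0 → p.1 j ≤ d - q - 1) ∧ (1 ≤ (j : ℕ) → p.1 j ≤ d - 1)) ∧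
        p.2 ≤ d / 2 - 1} : ℤ) =
      (∑ c ∈ Finset.range (d / 2 + 1), ((d - 2 * c + n - q - 1).choose (n - q - 1) : ℤ))
        - (∑ c ∈ Finset.range (q / 2 + 1), ((n - 2 * c - 1).choose (n - q - 1) : ℤ))
        - ((n : ℤ) - q) :=
  stmt_8_general n q d hn hq2 hd hdq
end

section
/- Let n ≥ 2, 2 ≤ q ≤ n, and d ≥ q + 1 be integers. Then the number of functions a : Fin (n−q+2) → ℕ with a_0 + ⋯ + a_{n−q+1} = d, a_0 ≤ d − q − 1, and a_j ≤ d − 1 for all 1 ≤ j ≤ n − q + 1, equals C(d+n−q+1, n−q+1) − C(n+1, n−q+1) − (n−q+1). -/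
lemma length_adt : ∀ k n : ℕ, (List.Nat.antidiagonalTuple (k+1) n).length = (n + k).choose k := by
  intro k
  induction k with
  | zero => intro n; rw [List.Nat.antidiagonalTuple_one]; simp
  | succ k ih =>
    intro n
    show (List.Nat.antidiagonalTuple (k+1+1) n).length = _
    rw [List.Nat.antidiagonalTuple, List.length_flatMap, List.Nat.antidiagonal, List.map_map]
    simp only [Function.comp_def, List.length_map, ih]
    have h2 : (List.map (fun i => ((n - i) + k).choose k) (List.range (n+1))).sum
        = ∑ i ∈ Finset.range (n+1), ((n - i) + k).choose k := rfl
    rw [h2]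
    have h3 : ∀ i ∈ Finset.range (n+1), ((n - i) + k).choose k = ((n+1-1-i) + k).choose k := by
      intro i _
      have : n - i = n + 1 - 1 - i := by omega
      rw [this]
    rw [Finset.sum_congr rfl h3,
      Finset.sum_range_reflect (fun j => (j + k).choose k) (n+1),
      Nat.sum_range_add_choose n k, ← Nat.add_assoc]

lemma card_adt (k n : ℕ) :
    (Finset.Nat.antidiagonalTuple (k+1) n).card = (n + k).choose k := length_adt k n

/-- For `n ≥ 2`, `2 ≤ q ≤ n`, and `d ≥ q + 1`, the number of functions
`a : Fin (n-q+2) → ℕ` with `a 0 + ⋯ + a (n-q+1) = d`, `a 0 ≤ d - q - 1`, and `a j ≤ d - 1`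
for `1 ≤ j ≤ n - q + 1`, equals `C(d+n-q+1, n-q+1) - C(n+1, n-q+1) - (n-q+1)`. -/
theorem stmt_12 (n q d : ℕ) (hn : 2 ≤ n) (hq1 : 2 ≤ q) (hq2 : q ≤ n) (hd : q + 1 ≤ d) :
    (Set.ncard {a : Fin (n - q + 2) → ℕ |
        (∑ j, a j) = d ∧
        (∀ j : Fin (n - q + 2), ((j : ℕ) = 0 → a j ≤ d - q - 1) ∧
          (1 ≤ (j : ℕ) → a j ≤ d - 1))} : ℤ) =
      ((d + n - q + 1).choose (n - q + 1) : ℤ) - ((n + 1).choose (n - q + 1) : ℤ)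
        - ((n : ℤ) - q + 1) := by
  classical
  set m := n - q with hm
  set S : Finset (Fin (m+2) → ℕ) := Finset.Nat.antidiagonalTuple (m+2) d with hS
  set P : (Fin (m+2) → ℕ) → Prop := fun a =>
    ∀ j : Fin (m+2), ((j : ℕ) = 0 → a j ≤ d - q - 1) ∧ (1 ≤ (j : ℕ) → a j ≤ d - 1) with hP
  set e : Fin (m+2) → (Fin (m+2) → ℕ) := fun j => fun i => if i = j then d else 0 with he
  set B0 : Finset (Fin (m+2) → ℕ) := S.filter (fun a => d - q ≤ a 0) with hB0
  set T : Finset (Fin (m+2) → ℕ) :=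
    (Finset.univ.filter (fun j : Fin (m+2) => j ≠ 0)).image e with hT
  -- the set in question is the coercion of a Finset
  have hset : {a : Fin (m+2) → ℕ | (∑ j, a j) = d ∧ P a} = ↑(S.filter P) := by
    ext a
    simp [hS, Finset.Nat.mem_antidiagonalTuple]
  -- complement decomposition
  have hcompl : S.filter (fun a => ¬ P a) = B0 ∪ T := by
    ext a
    simp only [Finset.mem_filter, Finset.mem_union, hB0, hT, Finset.mem_image,
      Finset.Nat.mem_antidiagonalTuple, hS]
    constructor
    · rintro ⟨hsum, hnp⟩
      have hnp' : ∃ j : Fin (m+2),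
          ¬(((j : ℕ) = 0 → a j ≤ d - q - 1) ∧ (1 ≤ (j : ℕ) → a j ≤ d - 1)) := by
        by_contra hc
        push_neg at hc
        exact hnp hc
      obtain ⟨j, hj⟩ := hnp'
      rcases Nat.eq_zero_or_pos (j : ℕ) with hj0 | hj1
      · left
        have hj' : j = 0 := Fin.ext hj0
        subst hj'
        refine ⟨hsum, ?_⟩
        by_contra hlt
        apply hj
        constructor
        · intro _; omega
        · intro h1
          simp only [Fin.val_zero] at h1
          omega
      · right
        have hne : j ≠ 0 := by
          intro h; rw [h] at hj1; simp at hj1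
        have hja : d ≤ a j := by
          by_contra hlt
          apply hj
          refine ⟨fun h0 => absurd h0 (by omega), fun _ => by omega⟩
        have hle : a j ≤ d := by
          rw [← hsum]
          exact Finset.single_le_sum (fun i _ => Nat.zero_le _) (Finset.mem_univ j)
        have had : a j = d := by omega
        have hrest : ∑ i ∈ Finset.univ.erase j, a i = 0 := by
          have := Finset.add_sum_erase Finset.univ a (Finset.mem_univ j)
          omega
        refine ⟨j, by simp [hne], ?_⟩
        funext i
        rw [he]
        by_cases hij : i = j
        · simp [hij, had]
        · simp only [hij, if_neg hij]
          exact ((Finset.sum_eq_zero_iff.mp hrest) i (Finset.mem_erase.mpr ⟨hij, Finset.mem_univ i⟩)).symm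
    · rintro (⟨hsum, h0⟩ | ⟨j, hj, rfl⟩)
      · refine ⟨hsum, ?_⟩
        intro hp
        have h1 := (hp 0).1 (by simp)
        omega
      · simp only [Finset.mem_filter, Finset.mem_univ, true_and] at hj
        have hj1 : 1 ≤ (j : ℕ) := by
          have := Fin.pos_iff_ne_zero.mpr hj
          omega
        constructor
        · rw [he]
          simp
        · intro hp
          have h2 := (hp j).2 hj1
          rw [he] at h2
          simp at h2
          omega
  have hdisj : Disjoint B0 T := by
    rw [Finset.disjoint_left]
    rintro a ha hat
    rw [hB0, Finset.mem_filter] at ha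
    rw [hT, Finset.mem_image] at hat
    obtain ⟨j, hj, rfl⟩ := hat
    simp only [Finset.mem_filter, Finset.mem_univ, true_and] at hj
    have h0 : e j 0 = 0 := by
      rw [he]; simp [Ne.symm hj]
    omega
  -- cardinalities
  have hcardS : S.card = (d + m + 1).choose (m + 1) := by
    rw [hS, card_adt, ← Nat.add_assoc]
  have hcardB0 : B0.card = (n + 1).choose (m + 1) := by
    have hbij : B0.card = (Finset.Nat.antidiagonalTuple (m+2) q).card := by
      refine Finset.card_bij' (fun a _ => Function.update a 0 (a 0 - (d - q)))
        (fun b _ => Function.update b 0 (b 0 + (d - q))) ?_ ?_ ?_ ?_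
      · intro a ha
        rw [hB0, Finset.mem_filter, hS, Finset.Nat.mem_antidiagonalTuple] at ha
        obtain ⟨hsum, h0⟩ := ha
        rw [Finset.Nat.mem_antidiagonalTuple,
          Finset.sum_update_of_mem (Finset.mem_univ 0)]
        have := Finset.add_sum_erase Finset.univ a (Finset.mem_univ 0)
        rw [Finset.erase_eq] at this
        omega
      · intro b hb
        rw [Finset.Nat.mem_antidiagonalTuple] at hb
        rw [hB0, Finset.mem_filter, hS, Finset.Nat.mem_antidiagonalTuple]
        constructor
        · rw [Finset.sum_update_of_mem (Finset.mem_univ 0)]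
          have := Finset.add_sum_erase Finset.univ b (Finset.mem_univ 0)
          rw [Finset.erase_eq] at this
          omega
        · simp [Function.update]
      · intro a ha
        rw [hB0, Finset.mem_filter] at ha
        funext i
        by_cases hi : i = 0
        · subst hi
          simp [Function.update]
          omega
        · simp [Function.update, hi]
      · intro b _
        funext i
        by_cases hi : i = 0
        · subst hi
          simp [Function.update]
        · simp [Function.update, hi]
    rw [hbij, card_adt]
    congr 1
    omega
  have hcardT : T.card = m + 1 := by
    rw [hT, Finset.card_image_of_injOn]
    · rw [Finset.filter_ne', Finset.card_erase_of_mem (Finset.mem_univ 0)]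
      simp
    · intro j hj j' hj' hjj
      have h1 : e j j = d := by rw [he]; simp
      have h2 : e j' j = if j = j' then d else 0 := by rw [he]
      rw [hjj] at h1
      rw [h1] at h2
      by_contra hne
      rw [if_neg hne] at h2
      omega
  -- put it together
  have hsplit : (S.filter P).card + (B0 ∪ T).card = S.card := by
    rw [← hcompl]
    exact Finset.card_filter_add_card_filter_not _
  rw [Finset.card_union_of_disjoint hdisj] at hsplit
  rw [hset, Set.ncard_coe_finset]
  have harg : d + n - q + 1 = d + m + 1 := by omega
  rw [harg]
  have hmq : ((n : ℤ) - q + 1) = ((m + 1 : ℕ) : ℤ) := by push_cast; omega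
  rw [hmq]
  omega
end
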